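/- arXiv:2509.21474 — 4 statements merged into one kernel-verified Lean document; each statement's English description precedes it below -/
import Mathlib

section
/- Let V be a finite vocabulary containing a distinguished mask symbol m, let L, T ∈ ℕ, and let θ ↦ π_θ be a parametrized reverse process (θ ∈ ℝ^d) over trajectories x_T, x_{T−1}, …, x_0 ∈ V^L that factorizes as π_θ(x_{0:T}) = ρ(x_T) · Π_{t=0}^{T−1} Π_{l=1}^{L} π_θ(x_t^l | x_{t+1}), where ρ is a fixed prior, each per-token conditional π_θ(· | x_{t+1}) is a strictly positive probability mass function on V differentiable in θ, and the factor π_θ(x_t^l | x_{t+1}) is independent of θ whenever it is NOT the case that x_{t+1}^l = m and x_t^l ≠ m. Then for every reward function r : V^L → ℝ and every parameter θ_old, the gradient in θ at θ = θ_old of Σ_{x_{0:T}} π_θ(x_{0:T}) · r(x_0) equals the gradient in θ at θ = θ_old of Σ_{x_{0:T}} π_{θ_old}(x_{0:T}) · r(x_0) · Σ_{t=0}^{T−1} Σ_{l=1}^{L} 1{x_{t+1}^l = m ∧ x_t^l ≠ m} · π_θ(x_t^l | x_{t+1}) / π_{θ_old}(x_t^l | x_{t+1}). -/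
/-!
STATEMENT 0: Policy gradient identity for masked diffusion language models.
-/
theorem stmt_0 {V : Type*} [Fintype V] [DecidableEq V] (m : V)
    (L T d : ℕ)
    (π : EuclideanSpace ℝ (Fin d) → (Fin L → V) → Fin L → V → ℝ)
    (ρ : (Fin L → V) → ℝ)
    (hρ : ∀ x, 0 ≤ ρ x) (hρsum : ∑ x : Fin L → V, ρ x = 1)
    (hpos : ∀ θ ctx l v, 0 < π θ ctx l v)
    (hpmf : ∀ θ ctx l, ∑ v, π θ ctx l v = 1)
    (hdiff : ∀ ctx l v, Differentiable ℝ (fun θ => π θ ctx l v))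
    (hindep : ∀ θ θ' ctx l v, ¬(ctx l = m ∧ v ≠ m) → π θ ctx l v = π θ' ctx l v)
    (r : (Fin L → V) → ℝ) (θold : EuclideanSpace ℝ (Fin d)) :
    fderiv ℝ (fun θ => ∑ x : Fin (T + 1) → Fin L → V,
        (ρ (x (Fin.last T)) * ∏ t : Fin T, ∏ l, π θ (x t.succ) l (x t.castSucc l)) * r (x 0))
      θold
      =
    fderiv ℝ (fun θ => ∑ x : Fin (T + 1) → Fin L → V,
        (ρ (x (Fin.last T)) * ∏ t : Fin T, ∏ l, π θold (x t.succ) l (x t.castSucc l))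
          * r (x 0)
          * ∑ t : Fin T, ∑ l,
              (if x t.succ l = m ∧ x t.castSucc l ≠ m then
                 π θ (x t.succ) l (x t.castSucc l) / π θold (x t.succ) l (x t.castSucc l)
               else 0)) θold := by
  classical
  -- per-trajectory factor
  set f : (Fin (T + 1) → Fin L → V) → Fin T × Fin L → EuclideanSpace ℝ (Fin d) → ℝ :=
    fun x i θ => π θ (x i.1.succ) i.2 (x i.1.castSucc i.2) with hf
  -- derivative of each factor (0 if θ-independent)
  set f' : (Fin (T + 1) → Fin L → V) → Fin T × Fin L →
      (EuclideanSpace ℝ (Fin d)) →L[ℝ] ℝ :=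
    fun x i => if (x i.1.succ i.2 = m ∧ x i.1.castSucc i.2 ≠ m)
      then fderiv ℝ (f x i) θold else 0 with hf'
  have hfd : ∀ x i, HasFDerivAt (f x i) (f' x i) θold := by
    intro x i
    by_cases h : x i.1.succ i.2 = m ∧ x i.1.castSucc i.2 ≠ m
    · simp only [hf', if_pos h]
      exact ((hdiff _ _ _) θold).hasFDerivAt
    · simp only [hf', if_neg h]
      have : f x i = fun _ => π θold (x i.1.succ) i.2 (x i.1.castSucc i.2) :=
        funext fun θ => hindep θ θold _ _ _ h
      rw [this]
      exact hasFDerivAt_const _ _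
  -- common derivative for trajectory x
  set D : (Fin (T + 1) → Fin L → V) → (EuclideanSpace ℝ (Fin d)) →L[ℝ] ℝ :=
    fun x => (ρ (x (Fin.last T)) * r (x 0)) •
      ∑ i : Fin T × Fin L, (∏ j ∈ Finset.univ.erase i, f x j θold) • f' x i with hD
  have hprod : ∀ (x : Fin (T + 1) → Fin L → V) θ,
      (∏ t : Fin T, ∏ l, π θ (x t.succ) l (x t.castSucc l)) = ∏ i : Fin T × Fin L, f x i θ := by
    intro x θ
    rw [Fintype.prod_prod_type]
  -- LHS summand has derivative D x
  have hL : ∀ x : Fin (T + 1) → Fin L → V,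
      HasFDerivAt (fun θ =>
        (ρ (x (Fin.last T)) * ∏ t : Fin T, ∏ l, π θ (x t.succ) l (x t.castSucc l)) * r (x 0))
        (D x) θold := by
    intro x
    have h1 : HasFDerivAt (fun θ => ∏ i : Fin T × Fin L, f x i θ)
        (∑ i : Fin T × Fin L, (∏ j ∈ Finset.univ.erase i, f x j θold) • f' x i) θold :=
      HasFDerivAt.finset_prod (fun i _ => hfd x i)
    have h2 := (h1.const_mul (ρ (x (Fin.last T)))).mul_const (r (x 0))
    have heq : (fun θ =>
        (ρ (x (Fin.last T)) * ∏ t : Fin T, ∏ l, π θ (x t.succ) l (x t.castSucc l)) * r (x 0))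
        = fun θ => (ρ (x (Fin.last T)) * ∏ i : Fin T × Fin L, f x i θ) * r (x 0) := by
      funext θ; rw [hprod]
    rw [heq]
    refine h2.congr_fderiv (Eq.symm ?_)
    rw [hD]
    ext v
    simp [mul_comm, mul_assoc, mul_left_comm]
  -- RHS summand has derivative D x
  have hR : ∀ x : Fin (T + 1) → Fin L → V,
      HasFDerivAt (fun θ =>
        (ρ (x (Fin.last T)) * ∏ t : Fin T, ∏ l, π θold (x t.succ) l (x t.castSucc l))
          * r (x 0)
          * ∑ t : Fin T, ∑ l,
              (if x t.succ l = m ∧ x t.castSucc l ≠ m then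
                 π θ (x t.succ) l (x t.castSucc l) / π θold (x t.succ) l (x t.castSucc l)
               else 0)) (D x) θold := by
    intro x
    set C : ℝ := (ρ (x (Fin.last T)) * ∏ t : Fin T, ∏ l, π θold (x t.succ) l (x t.castSucc l))
      * r (x 0) with hC
    -- inner sum as sum over pairs
    have hsq : ∀ θ, (∑ t : Fin T, ∑ l,
        (if x t.succ l = m ∧ x t.castSucc l ≠ m then
           π θ (x t.succ) l (x t.castSucc l) / π θold (x t.succ) l (x t.castSucc l)
         else 0)) = ∑ i : Fin T × Fin L,
        (if x i.1.succ i.2 = m ∧ x i.1.castSucc i.2 ≠ m then f x i θ / f x i θold else 0) := by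
      intro θ; rw [Fintype.sum_prod_type]
    have hterm : ∀ i : Fin T × Fin L, HasFDerivAt (fun θ =>
        (if x i.1.succ i.2 = m ∧ x i.1.castSucc i.2 ≠ m then f x i θ / f x i θold else 0))
        ((f x i θold)⁻¹ • f' x i) θold := by
      intro i
      by_cases h : x i.1.succ i.2 = m ∧ x i.1.castSucc i.2 ≠ m
      · simp only [if_pos h]
        simp only [div_eq_mul_inv]
        have := (hfd x i).mul_const (f x i θold)⁻¹
        exact this
      · simp only [if_neg h, hf', if_neg h, smul_zero]
        exact hasFDerivAt_const _ _
    have hsum : HasFDerivAt (fun θ => ∑ i : Fin T × Fin L,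
        (if x i.1.succ i.2 = m ∧ x i.1.castSucc i.2 ≠ m then f x i θ / f x i θold else 0))
        (∑ i : Fin T × Fin L, (f x i θold)⁻¹ • f' x i) θold :=
      HasFDerivAt.fun_sum (fun i _ => hterm i)
    have h2 := hsum.const_mul C
    have heq : (fun θ => C * ∑ t : Fin T, ∑ l,
        (if x t.succ l = m ∧ x t.castSucc l ≠ m then
           π θ (x t.succ) l (x t.castSucc l) / π θold (x t.succ) l (x t.castSucc l)
         else 0)) = fun θ => C * ∑ i : Fin T × Fin L,
        (if x i.1.succ i.2 = m ∧ x i.1.castSucc i.2 ≠ m then f x i θ / f x i θold else 0) := by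
      funext θ; rw [hsq]
    rw [show (fun θ =>
        (ρ (x (Fin.last T)) * ∏ t : Fin T, ∏ l, π θold (x t.succ) l (x t.castSucc l))
          * r (x 0)
          * ∑ t : Fin T, ∑ l,
              (if x t.succ l = m ∧ x t.castSucc l ≠ m then
                 π θ (x t.succ) l (x t.castSucc l) / π θold (x t.succ) l (x t.castSucc l)
               else 0)) = (fun θ => C * ∑ i : Fin T × Fin L,
        (if x i.1.succ i.2 = m ∧ x i.1.castSucc i.2 ≠ m then f x i θ / f x i θold else 0))
      from heq]
    refine h2.congr_fderiv (Eq.symm ?_)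
    -- show D x = C • ∑ i, (f x i θold)⁻¹ • f' x i
    simp only [hD, Finset.smul_sum]
    refine Finset.sum_congr rfl fun i _ => ?_
    by_cases h : x i.1.succ i.2 = m ∧ x i.1.castSucc i.2 ≠ m
    · rw [smul_smul, smul_smul]
      congr 1
      have hP : (∏ j : Fin T × Fin L, f x j θold)
          = f x i θold * ∏ j ∈ Finset.univ.erase i, f x j θold :=
        (Finset.mul_prod_erase _ _ (Finset.mem_univ i)).symm
      have hne : f x i θold ≠ 0 := (hpos _ _ _ _).ne'
      field_simp
      rw [hC, hprod x θold, hP]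
      ring
    · have : f' x i = 0 := by simp [hf', if_neg h]
      simp [this]
  -- conclude
  rw [(HasFDerivAt.fun_sum (fun x _ => hL x)).fderiv,
      (HasFDerivAt.fun_sum (fun x _ => hR x)).fderiv]
end

section
/- Let S = (S^1, …, S^L) be a vector of {0,1}-valued random variables and let B, C be random variables on finite sets, with joint pmf positive on its support, such that: (i) S is conditionally independent of C given B (Markov property), (ii) S^1, …, S^L are conditionally independent of one another given C, and (iii) there is a set U of positions with |U| ≤ 2k such that for every l ∉ U, S^l is a deterministic function of C. Then I(S; B | C) ≤ 2k · log 2. Consequently, in a masked diffusion reverse process with a fixed schedule unmasking exactly k tokens per timestep, the timing component D_timing = E_{p_true}[ Σ_{l=1}^{L} log( τ(S_t^l | x_{t+1}) / τ(S_t^l | x_{t+2}) ) ] equals I(S_t; x_{t+1} | x_{t+2}) and satisfies D_timing ≤ 2k · log 2. -/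
/-!
STATEMENT 5: Timing bound via conditional mutual information.

`S = (S^1, …, S^L)` is a vector of `{0,1}`-valued random variables (modelled as
`Fin L → Bool`), and `B`, `C` are finite-valued random variables; `p s b c` is their joint
pmf.  Hypotheses:
(i)  Markov property: `S ⟂ C | B`, i.e. `p(s | b, c) = p(s | b)` (stated in
     cross-multiplied form `p(s,b,c) · p(b) = p(s,b) · p(b,c)` to avoid division by zero);
(ii) the coordinates `S^1, …, S^L` are conditionally independent given `C`
     (stated in cross-multiplied form `p(s,c) · p(c)^L = p(c) · ∏_l p(S^l = s^l, c)`);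
(iii) there is a set `U` of positions with `|U| ≤ 2k` such that for every `l ∉ U`, `S^l` is
     a deterministic function of `C` on the support.
In addition, `τb s b = p(s | b)` and `τc s c = p(s | c)` are the timing conditionals (the
products `∏_l τ(S^l | x)` of the timing kernel in the masked diffusion reverse process with
a fixed schedule unmasking exactly `k` tokens per timestep, with `B = x_{t+1}`,
`C = x_{t+2}`), again stated in cross-multiplied form.

Conclusion: `I(S; B | C) ≤ 2k · log 2`; consequently the timing component
`D_timing = E_p[ log ( τb(S | B) / τc(S | C) ) ]` equals `I(S; B | C)` and satisfies
`D_timing ≤ 2k · log 2`.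
-/
set_option maxHeartbeats 1000000 in
theorem stmt_5 {L k : ℕ} {B C : Type*} [Fintype B] [Fintype C]
    (p : (Fin L → Bool) → B → C → ℝ)
    (τb : (Fin L → Bool) → B → ℝ) (τc : (Fin L → Bool) → C → ℝ)
    (hp : ∀ s b c, 0 ≤ p s b c)
    (hsum : ∑ s, ∑ b, ∑ c, p s b c = 1)
    (hmarkov : ∀ s b c,
      p s b c * (∑ s', ∑ c', p s' b c') = (∑ c', p s b c') * (∑ s', p s' b c))
    (hcondindep : ∀ (s : Fin L → Bool) (c : C),
      (∑ b, p s b c) * (∑ s', ∑ b, p s' b c) ^ L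
        = (∑ s', ∑ b, p s' b c) *
            ∏ l, (∑ s', ∑ b, if s' l = s l then p s' b c else 0))
    (U : Finset (Fin L)) (hU : U.card ≤ 2 * k)
    (hdet : ∀ l ∉ U, ∃ φ : C → Bool, ∀ s b c, p s b c ≠ 0 → s l = φ c)
    (hτb : ∀ s b, (∑ s', ∑ c, p s' b c) * τb s b = ∑ c, p s b c)
    (hτc : ∀ s c, (∑ s', ∑ b, p s' b c) * τc s c = ∑ b, p s b c) :
    (∑ s, ∑ b, ∑ c, p s b c *
        Real.log ((p s b c / (∑ s', ∑ b', p s' b' c))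
          / (((∑ b', p s b' c) / (∑ s', ∑ b', p s' b' c))
             * ((∑ s', p s' b c) / (∑ s', ∑ b', p s' b' c))))
       ≤ 2 * (k : ℝ) * Real.log 2)
    ∧ (∑ s, ∑ b, ∑ c, p s b c * Real.log (τb s b / τc s c)
        = ∑ s, ∑ b, ∑ c, p s b c *
            Real.log ((p s b c / (∑ s', ∑ b', p s' b' c))
              / (((∑ b', p s b' c) / (∑ s', ∑ b', p s' b' c))
                 * ((∑ s', p s' b c) / (∑ s', ∑ b', p s' b' c)))))
    ∧ (∑ s, ∑ b, ∑ c, p s b c * Real.log (τb s b / τc s c) ≤ 2 * (k : ℝ) * Real.log 2) := by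
  classical
  have hq0 : ∀ s c, (0:ℝ) ≤ ∑ b, p s b c := fun s c => Finset.sum_nonneg fun b _ => hp s b c
  have hr0 : ∀ c, (0:ℝ) ≤ ∑ s, ∑ b, p s b c := fun c => Finset.sum_nonneg fun s _ => hq0 s c
  have hple_q : ∀ s b c, p s b c ≤ ∑ b', p s b' c := fun s b c =>
    Finset.single_le_sum (fun b' _ => hp s b' c) (Finset.mem_univ b)
  have hple_pbc : ∀ s b c, p s b c ≤ ∑ s', p s' b c := fun s b c =>
    Finset.single_le_sum (fun s' _ => hp s' b c) (Finset.mem_univ s)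
  have hqle_r : ∀ s c, (∑ b, p s b c) ≤ ∑ s', ∑ b, p s' b c := fun s c =>
    Finset.single_le_sum (fun s' _ => hq0 s' c) (Finset.mem_univ s)
  have hql_eq : ∀ (l : Fin L) (v : Bool) (c : C),
      (∑ s', ∑ b, if s' l = v then p s' b c else 0)
        = ∑ s' ∈ Finset.univ.filter (fun s' => s' l = v), ∑ b, p s' b c := by
    intro l v c
    rw [Finset.sum_filter]
    exact Finset.sum_congr rfl fun s' _ => by by_cases h : s' l = v <;> simp [h]
  have hqle_ql : ∀ (l : Fin L) (s : Fin L → Bool) (c : C),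
      (∑ b, p s b c) ≤ ∑ s', ∑ b, if s' l = s l then p s' b c else 0 := by
    intro l s c
    rw [hql_eq]
    exact Finset.single_le_sum (fun s' _ => hq0 s' c) (by simp)
  have hsum_q : (∑ s, ∑ c, ∑ b, p s b c) = 1 := by
    rw [← hsum]; exact Finset.sum_congr rfl fun s _ => Finset.sum_comm
  have hsum_r : (∑ c, ∑ s, ∑ b, p s b c) = 1 := by
    rw [← hsum_q]; exact Finset.sum_comm
  -- Step 1: I ≤ conditional entropy H(S|C)
  have step1 : (∑ s, ∑ b, ∑ c, p s b c *
        Real.log ((p s b c / (∑ s', ∑ b', p s' b' c))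
          / (((∑ b', p s b' c) / (∑ s', ∑ b', p s' b' c))
             * ((∑ s', p s' b c) / (∑ s', ∑ b', p s' b' c)))))
      ≤ ∑ s, ∑ c, (∑ b, p s b c) *
          Real.log ((∑ s', ∑ b, p s' b c) / (∑ b, p s b c)) := by
    calc (∑ s, ∑ b, ∑ c, p s b c *
        Real.log ((p s b c / (∑ s', ∑ b', p s' b' c))
          / (((∑ b', p s b' c) / (∑ s', ∑ b', p s' b' c))
             * ((∑ s', p s' b c) / (∑ s', ∑ b', p s' b' c)))))
        ≤ ∑ s, ∑ b, ∑ c, p s b c *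
            Real.log ((∑ s', ∑ b', p s' b' c) / (∑ b', p s b' c)) := by
          refine Finset.sum_le_sum fun s _ => Finset.sum_le_sum fun b _ =>
            Finset.sum_le_sum fun c _ => ?_
          by_cases hps : p s b c = 0
          · simp [hps]
          · have hpp : 0 < p s b c := lt_of_le_of_ne (hp s b c) (Ne.symm hps)
            have hQ : 0 < ∑ b', p s b' c := lt_of_lt_of_le hpp (hple_q s b c)
            have hPBC : 0 < ∑ s', p s' b c := lt_of_lt_of_le hpp (hple_pbc s b c)
            have hR : 0 < ∑ s', ∑ b', p s' b' c := lt_of_lt_of_le hQ (hqle_r s c)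
            have harg : (p s b c / (∑ s', ∑ b', p s' b' c))
                / (((∑ b', p s b' c) / (∑ s', ∑ b', p s' b' c))
                   * ((∑ s', p s' b c) / (∑ s', ∑ b', p s' b' c)))
                = (p s b c / (∑ s', p s' b c))
                  * ((∑ s', ∑ b', p s' b' c) / (∑ b', p s b' c)) := by
              field_simp
            rw [harg, Real.log_mul (by positivity) (by positivity)]
            have hlog : Real.log (p s b c / (∑ s', p s' b c)) ≤ 0 :=
              Real.log_nonpos (by positivity) ((div_le_one hPBC).mpr (hple_pbc s b c))
            nlinarith [hp s b c]
      _ = ∑ s, ∑ c, (∑ b, p s b c) *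
            Real.log ((∑ s', ∑ b, p s' b c) / (∑ b, p s b c)) := by
          refine Finset.sum_congr rfl fun s _ => ?_
          rw [Finset.sum_comm]
          exact Finset.sum_congr rfl fun c _ => (Finset.sum_mul _ _ _).symm

  -- Step 2: H(S|C) decomposes across coordinates
  have step2 : (∑ s, ∑ c, (∑ b, p s b c) *
          Real.log ((∑ s', ∑ b, p s' b c) / (∑ b, p s b c)))
      = ∑ l, ∑ s, ∑ c, (∑ b, p s b c) *
          Real.log ((∑ s', ∑ b, p s' b c)
            / (∑ s', ∑ b, if s' l = s l then p s' b c else 0)) := by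
    conv_rhs => rw [Finset.sum_comm]
    refine Finset.sum_congr rfl fun s _ => ?_
    conv_rhs => rw [Finset.sum_comm]
    refine Finset.sum_congr rfl fun c _ => ?_
    rw [← Finset.mul_sum]
    by_cases hQz : (∑ b, p s b c) = 0
    · simp [hQz]
    · have hQ : 0 < ∑ b, p s b c := lt_of_le_of_ne (hq0 s c) (Ne.symm hQz)
      have hR : 0 < ∑ s', ∑ b, p s' b c := lt_of_lt_of_le hQ (hqle_r s c)
      have hql : ∀ l : Fin L, 0 < ∑ s', ∑ b, if s' l = s l then p s' b c else 0 :=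
        fun l => lt_of_lt_of_le hQ (hqle_ql l s c)
      congr 1
      have h1 := congrArg Real.log (hcondindep s c)
      rw [Real.log_mul hQ.ne' (pow_ne_zero _ hR.ne'), Real.log_pow,
          Real.log_mul hR.ne' (Finset.prod_ne_zero_iff.mpr fun l _ => (hql l).ne'),
          Real.log_prod (fun l _ => (hql l).ne')] at h1
      have h2 : (∑ l, Real.log ((∑ s', ∑ b, p s' b c)
            / (∑ s', ∑ b, if s' l = s l then p s' b c else 0)))
          = ∑ l : Fin L, (Real.log (∑ s', ∑ b, p s' b c)
            - Real.log (∑ s', ∑ b, if s' l = s l then p s' b c else 0)) :=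
        Finset.sum_congr rfl fun l _ => Real.log_div hR.ne' (hql l).ne'
      rw [h2, Finset.sum_sub_distrib, Finset.sum_const, Finset.card_univ, Fintype.card_fin,
          Real.log_div hR.ne' hQ.ne', nsmul_eq_mul]
      linarith
  -- Step 3: coordinates outside U contribute 0
  have step3 : ∀ l ∉ U, (∑ s, ∑ c, (∑ b, p s b c) *
          Real.log ((∑ s', ∑ b, p s' b c)
            / (∑ s', ∑ b, if s' l = s l then p s' b c else 0))) = 0 := by
    intro l hl
    obtain ⟨φ, hφ⟩ := hdet l hl
    refine Finset.sum_eq_zero fun s _ => Finset.sum_eq_zero fun c _ => ?_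
    by_cases hQz : (∑ b, p s b c) = 0
    · simp [hQz]
    · obtain ⟨b, _, hb⟩ := Finset.exists_ne_zero_of_sum_ne_zero hQz
      have hQ : 0 < ∑ b, p s b c := lt_of_le_of_ne (hq0 s c) (Ne.symm hQz)
      have hR : 0 < ∑ s', ∑ b, p s' b c := lt_of_lt_of_le hQ (hqle_r s c)
      have hql : (∑ s', ∑ b', if s' l = s l then p s' b' c else 0)
          = ∑ s', ∑ b', p s' b' c := by
        refine Finset.sum_congr rfl fun s' _ => Finset.sum_congr rfl fun b' _ => ?_
        by_cases h : s' l = s l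
        · simp [h]
        · have hz : p s' b' c = 0 := by
            by_contra hne
            exact h ((hφ s' b' c hne).trans (hφ s b c hb).symm)
          simp [h, hz]
      rw [hql, div_self hR.ne', Real.log_one, mul_zero]
  -- Step 4: each coordinate contributes at most log 2
  have step4 : ∀ l : Fin L, (∑ s, ∑ c, (∑ b, p s b c) *
          Real.log ((∑ s', ∑ b, p s' b c)
            / (∑ s', ∑ b, if s' l = s l then p s' b c else 0))) ≤ Real.log 2 := by
    intro l
    have t1 : ∀ (s : Fin L → Bool) (c : C),
        (∑ b, p s b c) * Real.log ((∑ s', ∑ b, p s' b c)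
            / (∑ s', ∑ b, if s' l = s l then p s' b c else 0))
        ≤ (∑ b, p s b c) * Real.log 2
          + ((∑ b, p s b c) * ((∑ s', ∑ b, p s' b c)
              / (2 * (∑ s', ∑ b, if s' l = s l then p s' b c else 0)))
            - (∑ b, p s b c)) := by
      intro s c
      by_cases hQz : (∑ b, p s b c) = 0
      · simp [hQz]
      · have hQ : 0 < ∑ b, p s b c := lt_of_le_of_ne (hq0 s c) (Ne.symm hQz)
        have hR : 0 < ∑ s', ∑ b, p s' b c := lt_of_lt_of_le hQ (hqle_r s c)
        have hql : 0 < ∑ s', ∑ b, if s' l = s l then p s' b c else 0 :=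
          lt_of_lt_of_le hQ (hqle_ql l s c)
        have hsplit : Real.log ((∑ s', ∑ b, p s' b c)
              / (∑ s', ∑ b, if s' l = s l then p s' b c else 0))
            = Real.log 2 + Real.log ((∑ s', ∑ b, p s' b c)
              / (2 * (∑ s', ∑ b, if s' l = s l then p s' b c else 0))) := by
          rw [Real.log_div hR.ne' hql.ne', Real.log_div hR.ne' (by positivity),
            Real.log_mul two_ne_zero hql.ne']
          ring
        have hle := Real.log_le_sub_one_of_pos (show 0 < (∑ s', ∑ b, p s' b c)
              / (2 * (∑ s', ∑ b, if s' l = s l then p s' b c else 0)) by positivity)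
        rw [hsplit]
        nlinarith [hQ.le]
    have hT : (∑ s, ∑ c, (∑ b, p s b c) * ((∑ s', ∑ b, p s' b c)
          / (2 * (∑ s', ∑ b, if s' l = s l then p s' b c else 0)))) ≤ 1 := by
      rw [Finset.sum_comm, ← hsum_r]
      refine Finset.sum_le_sum fun c _ => ?_
      rw [← Finset.sum_fiberwise Finset.univ (fun s : Fin L → Bool => s l)
        (fun s => (∑ b, p s b c) * ((∑ s', ∑ b, p s' b c)
          / (2 * (∑ s', ∑ b, if s' l = s l then p s' b c else 0))))]
      have hRhalf : (∑ _v : Bool, (∑ s, ∑ b, p s b c) / 2)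
          = ∑ s, ∑ b, p s b c := by
        simp; ring
      refine le_trans (Finset.sum_le_sum fun v _ => ?_) hRhalf.le
      have hcongr : (∑ s ∈ Finset.univ.filter (fun s : Fin L → Bool => s l = v),
            (∑ b, p s b c) * ((∑ s', ∑ b, p s' b c)
              / (2 * (∑ s', ∑ b, if s' l = s l then p s' b c else 0))))
          = (∑ s ∈ Finset.univ.filter (fun s : Fin L → Bool => s l = v),
            (∑ b, p s b c)) * ((∑ s', ∑ b, p s' b c)
              / (2 * (∑ s', ∑ b, if s' l = v then p s' b c else 0))) := by
        rw [Finset.sum_mul]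
        refine Finset.sum_congr rfl fun s hs => ?_
        have hsv : s l = v := (Finset.mem_filter.mp hs).2
        rw [hsv]
      rw [hcongr, ← hql_eq l v c]
      by_cases hz : (∑ s', ∑ b, if s' l = v then p s' b c else 0) = 0
      · rw [hz]
        simp only [zero_mul]
        linarith [hr0 c]
      · refine le_of_eq ?_
        rw [← mul_div_assoc, mul_comm (2:ℝ) (∑ s', ∑ b, if s' l = v then p s' b c else 0)]
        exact mul_div_mul_left _ _ hz
    calc (∑ s, ∑ c, (∑ b, p s b c) *
          Real.log ((∑ s', ∑ b, p s' b c)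
            / (∑ s', ∑ b, if s' l = s l then p s' b c else 0)))
        ≤ ∑ s, ∑ c, ((∑ b, p s b c) * Real.log 2
          + ((∑ b, p s b c) * ((∑ s', ∑ b, p s' b c)
              / (2 * (∑ s', ∑ b, if s' l = s l then p s' b c else 0)))
            - (∑ b, p s b c))) :=
          Finset.sum_le_sum fun s _ => Finset.sum_le_sum fun c _ => t1 s c
      _ = (∑ s, ∑ c, ∑ b, p s b c) * Real.log 2
          + ((∑ s, ∑ c, (∑ b, p s b c) * ((∑ s', ∑ b, p s' b c)
              / (2 * (∑ s', ∑ b, if s' l = s l then p s' b c else 0))))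
            - (∑ s, ∑ c, ∑ b, p s b c)) := by
          simp only [Finset.sum_add_distrib, Finset.sum_sub_distrib, Finset.sum_mul]
      _ ≤ Real.log 2 := by rw [hsum_q]; nlinarith [hT]
  have partA : (∑ s, ∑ b, ∑ c, p s b c *
        Real.log ((p s b c / (∑ s', ∑ b', p s' b' c))
          / (((∑ b', p s b' c) / (∑ s', ∑ b', p s' b' c))
             * ((∑ s', p s' b c) / (∑ s', ∑ b', p s' b' c)))))
      ≤ 2 * (k : ℝ) * Real.log 2 := by
    refine le_trans (step1.trans_eq step2) ?_
    have h5 : (∑ l, ∑ s, ∑ c, (∑ b, p s b c) *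
          Real.log ((∑ s', ∑ b, p s' b c)
            / (∑ s', ∑ b, if s' l = s l then p s' b c else 0)))
        = ∑ l ∈ U, ∑ s, ∑ c, (∑ b, p s b c) *
          Real.log ((∑ s', ∑ b, p s' b c)
            / (∑ s', ∑ b, if s' l = s l then p s' b c else 0)) :=
      (Finset.sum_subset (Finset.subset_univ U) (fun l _ hl => step3 l hl)).symm
    rw [h5]
    calc (∑ l ∈ U, ∑ s, ∑ c, (∑ b, p s b c) *
          Real.log ((∑ s', ∑ b, p s' b c)
            / (∑ s', ∑ b, if s' l = s l then p s' b c else 0)))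
        ≤ ∑ l ∈ U, Real.log 2 := Finset.sum_le_sum fun l _ => step4 l
      _ = U.card * Real.log 2 := by rw [Finset.sum_const, nsmul_eq_mul]
      _ ≤ 2 * (k : ℝ) * Real.log 2 := by
          have h2 : (0:ℝ) ≤ Real.log 2 := Real.log_nonneg (by norm_num)
          have : (U.card : ℝ) ≤ 2 * k := by exact_mod_cast hU
          nlinarith
  have partB : (∑ s, ∑ b, ∑ c, p s b c * Real.log (τb s b / τc s c))
      = ∑ s, ∑ b, ∑ c, p s b c *
            Real.log ((p s b c / (∑ s', ∑ b', p s' b' c))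
              / (((∑ b', p s b' c) / (∑ s', ∑ b', p s' b' c))
                 * ((∑ s', p s' b c) / (∑ s', ∑ b', p s' b' c)))) := by
    refine Finset.sum_congr rfl fun s _ => Finset.sum_congr rfl fun b _ =>
      Finset.sum_congr rfl fun c _ => ?_
    by_cases hps : p s b c = 0
    · simp [hps]
    · have hpp : 0 < p s b c := lt_of_le_of_ne (hp s b c) (Ne.symm hps)
      have hQ : 0 < ∑ b', p s b' c := lt_of_lt_of_le hpp (hple_q s b c)
      have hPBC : 0 < ∑ s', p s' b c := lt_of_lt_of_le hpp (hple_pbc s b c)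
      have hR : 0 < ∑ s', ∑ b', p s' b' c := lt_of_lt_of_le hQ (hqle_r s c)
      have hPSB : 0 < ∑ c', p s b c' := lt_of_lt_of_le hpp
        (Finset.single_le_sum (fun c' _ => hp s b c') (Finset.mem_univ c))
      have hPB : 0 < ∑ s', ∑ c', p s' b c' := lt_of_lt_of_le hPSB
        (Finset.single_le_sum (fun s' _ => Finset.sum_nonneg fun c' _ => hp s' b c')
          (Finset.mem_univ s))
      have hτbv : τb s b = (∑ c', p s b c') / (∑ s', ∑ c', p s' b c') := by
        rw [eq_div_iff hPB.ne']; linarith [hτb s b]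
      have hτcv : τc s c = (∑ b', p s b' c) / (∑ s', ∑ b', p s' b' c) := by
        rw [eq_div_iff hR.ne']; linarith [hτc s c]
      have harg : τb s b / τc s c
          = (p s b c / (∑ s', ∑ b', p s' b' c))
              / (((∑ b', p s b' c) / (∑ s', ∑ b', p s' b' c))
                 * ((∑ s', p s' b c) / (∑ s', ∑ b', p s' b' c))) := by
        rw [hτbv, hτcv]
        field_simp
        linear_combination -hmarkov s b c
      rw [harg]
  exact ⟨partA, partB, partB ▸ partA⟩
end

section
/- Consider a masked diffusion reverse process with a fixed schedule unmasking exactly k tokens at each timestep, timing kernel τ und value kernel ν, and value prediction sensitivity ε. Let p_true(x_t, x_{t+1} | x_{t+2}) = π(x_t | x_{t+1}) π(x_{t+1} | x_{t+2}) and p_approx(x_t, x_{t+1} | x_{t+2}) = π(x_t | x_{t+2}) π(x_{t+1} | x_{t+2}), with all factors positive on the support. Then D(p_true ‖ p_approx) ≤ 2k · log 2 + k · ε. -/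
/-!
STATEMENT 8: Consecutive timestep bound `D(p_true ‖ p_approx) ≤ 2k · log 2 + k · ε`.

Masked diffusion reverse process over vocabulary `V` with mask `m`, with timing kernel `τ`
and value kernel `ν`: the per-token step factors as
`π(x_t^l | x_{t+1}) = τ(S_t^l | x_{t+1}^l) · ν(V_t^l | S_t^l, x_{t+1})`, where
`S_t^l = 1{x_{t+1}^l = m ∧ x_t^l ≠ m}`; `ν(· | S=1, x)` is the model's softmax distribution
over `V`, `ν(· | S=0, x)` deterministically preserves the token, and the fixed schedule
unmasks exactly `k` tokens per timestep (on the support).  With the state `x_{t+2}` fixed,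
`p_true(x_t, x_{t+1} | x_{t+2}) = π(x_t | x_{t+1}) π(x_{t+1} | x_{t+2})` and
`p_approx(x_t, x_{t+1} | x_{t+2}) = π(x_t | x_{t+2}) π(x_{t+1} | x_{t+2})`, all factors
positive on the support.  The value prediction sensitivity `ε` bounds, over all values,
positions and reachable states, `log ( ν(v | S=1, x_{t+1}) / ν(v | S=1, x_{t+2}) )`.  Then
`D(p_true ‖ p_approx) ≤ 2k · log 2 + k · ε`.
-/

/-- Unmasking indicator `S^l = 1{xnext^l = m ∧ xcur^l ≠ m}`. -/
def unmaskInd {V : Type*} [DecidableEq V] (m : V) {L : ℕ}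
    (xnext xcur : Fin L → V) (l : Fin L) : Bool :=
  decide (xnext l = m ∧ xcur l ≠ m)

/-- One reverse diffusion step probability `π(xcur | xnext)`. -/
noncomputable def stepProb {V : Type*} [DecidableEq V] (m : V) {L : ℕ}
    (τ : Bool → V → ℝ) (ν : Bool → (Fin L → V) → Fin L → V → ℝ)
    (xcur xnext : Fin L → V) : ℝ :=
  ∏ l, τ (unmaskInd m xnext xcur l) (xnext l) * ν (unmaskInd m xnext xcur l) xnext l (xcur l)

/-- StepMerge factor `π(xcur | xcond)`: probability of the pair `(S, V)` determined by the
step from `xnext` to `xcur`, with both kernels conditioned on the state `xcond`. -/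
noncomputable def stepProbMerged {V : Type*} [DecidableEq V] (m : V) {L : ℕ}
    (τ : Bool → V → ℝ) (ν : Bool → (Fin L → V) → Fin L → V → ℝ)
    (xcur xnext xcond : Fin L → V) : ℝ :=
  ∏ l, τ (unmaskInd m xnext xcur l) (xcond l) * ν (unmaskInd m xnext xcur l) xcond l (xcur l)

theorem stmt_8 {V : Type*} [Fintype V] [DecidableEq V] (m : V) {L k : ℕ}
    (τ : Bool → V → ℝ) (ν : Bool → (Fin L → V) → Fin L → V → ℝ)
    (xt2 : Fin L → V) (ε : ℝ)
    (hτ : ∀ s x, 0 ≤ τ s x)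
    (hν : ∀ s (x : Fin L → V) l v, 0 ≤ ν s x l v)
    (hτker : ∀ x : V, τ true x + τ false x = 1)
    (hνker : ∀ s (x : Fin L → V) l, ∑ v, ν s x l v = 1)
    (hdet : ∀ (x : Fin L → V) l v, ν false x l v = if v = x l then 1 else 0)
    (hsum : ∑ xt : Fin L → V, ∑ xt1 : Fin L → V,
        stepProb m τ ν xt xt1 * stepProb m τ ν xt1 xt2 = 1)
    (hk : ∀ xt xt1 : Fin L → V, stepProb m τ ν xt xt1 * stepProb m τ ν xt1 xt2 ≠ 0 →
        (Finset.univ.filter fun l => xt1 l = m ∧ xt l ≠ m).card = k ∧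
        (Finset.univ.filter fun l => xt2 l = m ∧ xt1 l ≠ m).card = k)
    (hpossupp : ∀ xt xt1 : Fin L → V,
      stepProb m τ ν xt xt1 * stepProb m τ ν xt1 xt2 ≠ 0 → ∀ l,
        0 < τ (unmaskInd m xt1 xt l) (xt1 l) ∧
        0 < ν (unmaskInd m xt1 xt l) xt1 l (xt l) ∧
        0 < τ (unmaskInd m xt1 xt l) (xt2 l) ∧
        0 < ν (unmaskInd m xt1 xt l) xt2 l (xt l) ∧
        0 < τ (unmaskInd m xt2 xt1 l) (xt2 l) ∧
        0 < ν (unmaskInd m xt2 xt1 l) xt2 l (xt1 l))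
    (hε : 0 ≤ ε)
    (hbound : ∀ xt xt1 : Fin L → V, stepProb m τ ν xt xt1 * stepProb m τ ν xt1 xt2 ≠ 0 →
        ∀ l v, Real.log (ν true xt1 l v / ν true xt2 l v) ≤ ε) :
    ∑ xt : Fin L → V, ∑ xt1 : Fin L → V,
        (stepProb m τ ν xt xt1 * stepProb m τ ν xt1 xt2) *
          Real.log ((stepProb m τ ν xt xt1 * stepProb m τ ν xt1 xt2)
            / (stepProbMerged m τ ν xt xt1 xt2 * stepProb m τ ν xt1 xt2))
      ≤ 2 * (k : ℝ) * Real.log 2 + (k : ℝ) * ε := by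
  have hC2 : (0:ℝ) ≤ 2 * (k:ℝ) * Real.log 2 := by
    have : (0:ℝ) ≤ Real.log 2 := Real.log_nonneg one_le_two
    positivity
  have hkey : ∀ xt xt1 : Fin L → V,
      (stepProb m τ ν xt xt1 * stepProb m τ ν xt1 xt2) *
        Real.log ((stepProb m τ ν xt xt1 * stepProb m τ ν xt1 xt2)
          / (stepProbMerged m τ ν xt xt1 xt2 * stepProb m τ ν xt1 xt2))
      ≤ (stepProb m τ ν xt xt1 * stepProb m τ ν xt1 xt2) *
          (2 * (k:ℝ) * Real.log 2 + (k:ℝ) * ε) := by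
    intro xt xt1
    by_cases hp : stepProb m τ ν xt xt1 * stepProb m τ ν xt1 xt2 = 0
    · rw [hp]; simp
    · obtain ⟨hk1, _hk2⟩ := hk xt xt1 hp
      have hpos := hpossupp xt xt1 hp
      have hstep1 : 0 < stepProb m τ ν xt xt1 := by
        unfold stepProb
        exact Finset.prod_pos (fun l _ => mul_pos (hpos l).1 (hpos l).2.1)
      have hstep2 : 0 < stepProb m τ ν xt1 xt2 := by
        unfold stepProb
        exact Finset.prod_pos (fun l _ => mul_pos (hpos l).2.2.2.2.1 (hpos l).2.2.2.2.2)
      have hmerged : 0 < stepProbMerged m τ ν xt xt1 xt2 := by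
        unfold stepProbMerged
        exact Finset.prod_pos (fun l _ => mul_pos (hpos l).2.2.1 (hpos l).2.2.2.1)
      -- structure on the support
      have hfalse : ∀ l, unmaskInd m xt1 xt l = false → xt l = xt1 l ∧ xt l = xt2 l := by
        intro l hS
        have h1 := (hpos l).2.1
        have h2 := (hpos l).2.2.2.1
        rw [hS, hdet] at h1
        rw [hS, hdet] at h2
        constructor
        · by_contra h; simp [h] at h1
        · by_contra h; simp [h] at h2
      have htrue : ∀ l, unmaskInd m xt1 xt l = true → xt1 l = m ∧ xt2 l = m := by
        intro l hS
        have h1 : xt1 l = m ∧ xt l ≠ m := by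
          unfold unmaskInd at hS; exact of_decide_eq_true hS
        refine ⟨h1.1, ?_⟩
        have h2 := (hpos l).2.2.2.2.2
        have hS2 : unmaskInd m xt2 xt1 l = false := by
          unfold unmaskInd
          simp [h1.1]
        rw [hS2, hdet] at h2
        have he : xt1 l = xt2 l := by by_contra h; simp [h] at h2
        rw [← he]; exact h1.1
      -- pointwise factor bound
      have hle : ∀ l ∈ Finset.univ,
          τ (unmaskInd m xt1 xt l) (xt1 l) * ν (unmaskInd m xt1 xt l) xt1 l (xt l)
          ≤ (if unmaskInd m xt1 xt l = true then Real.exp ε else 1) *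
            (τ (unmaskInd m xt1 xt l) (xt2 l) * ν (unmaskInd m xt1 xt l) xt2 l (xt l)) := by
        intro l _
        cases hS : unmaskInd m xt1 xt l with
        | false =>
            obtain ⟨h1, h2⟩ := hfalse l hS
            have h12 : xt1 l = xt2 l := h1.symm.trans h2
            simp [hdet, h1, h2, h12]
        | true =>
            obtain ⟨h1, h2⟩ := htrue l hS
            have ha : 0 < ν true xt1 l (xt l) := by
              have := (hpos l).2.1; rwa [hS] at this
            have hb2 : 0 < ν true xt2 l (xt l) := by
              have := (hpos l).2.2.2.1; rwa [hS] at this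
            have hb := hbound xt xt1 hp l (xt l)
            have hdiv : ν true xt1 l (xt l) / ν true xt2 l (xt l) ≤ Real.exp ε := by
              have h' := Real.exp_le_exp.mpr hb
              rwa [Real.exp_log (div_pos ha hb2)] at h'
            have hν' : ν true xt1 l (xt l) ≤ Real.exp ε * ν true xt2 l (xt l) := by
              rw [div_le_iff₀ hb2] at hdiv; linarith
            have hτm := hτ true (xt1 l)
            have h3 : xt1 l = xt2 l := h1.trans h2.symm
            rw [← h3]
            calc τ true (xt1 l) * ν true xt1 l (xt l)
                ≤ τ true (xt1 l) * (Real.exp ε * ν true xt2 l (xt l)) :=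
                  mul_le_mul_of_nonneg_left hν' hτm
              _ = (if true = true then Real.exp ε else 1) *
                  (τ true (xt1 l) * ν true xt2 l (xt l)) := by
                    rw [if_pos rfl]; ring
      have hcard : (Finset.univ.filter fun l => unmaskInd m xt1 xt l = true).card = k := by
        rw [← hk1]
        congr 1
        ext l
        simp [unmaskInd]
      have hprodc : (∏ l, (if unmaskInd m xt1 xt l = true then Real.exp ε else 1))
          = Real.exp ((k:ℝ) * ε) := by
        rw [Finset.prod_ite, Finset.prod_const, Finset.prod_const, one_pow, mul_one, hcard]
        rw [← Real.exp_nat_mul]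
      have hprod : stepProb m τ ν xt xt1
          ≤ Real.exp ((k:ℝ) * ε) * stepProbMerged m τ ν xt xt1 xt2 := by
        have h1 : stepProb m τ ν xt xt1
            ≤ ∏ l, (if unmaskInd m xt1 xt l = true then Real.exp ε else 1) *
              (τ (unmaskInd m xt1 xt l) (xt2 l) * ν (unmaskInd m xt1 xt l) xt2 l (xt l)) := by
          unfold stepProb
          exact Finset.prod_le_prod
            (fun l _ => le_of_lt (mul_pos (hpos l).1 (hpos l).2.1)) hle
        calc stepProb m τ ν xt xt1 ≤ _ := h1
          _ = (∏ l, (if unmaskInd m xt1 xt l = true then Real.exp ε else 1)) *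
              stepProbMerged m τ ν xt xt1 xt2 := by
                unfold stepProbMerged; rw [Finset.prod_mul_distrib]
          _ = Real.exp ((k:ℝ) * ε) * stepProbMerged m τ ν xt xt1 xt2 := by rw [hprodc]
      have hlog : Real.log ((stepProb m τ ν xt xt1 * stepProb m τ ν xt1 xt2)
            / (stepProbMerged m τ ν xt xt1 xt2 * stepProb m τ ν xt1 xt2)) ≤ (k:ℝ) * ε := by
        rw [mul_div_mul_right _ _ (ne_of_gt hstep2)]
        have hdle : stepProb m τ ν xt xt1 / stepProbMerged m τ ν xt xt1 xt2
            ≤ Real.exp ((k:ℝ) * ε) := (div_le_iff₀ hmerged).mpr (by linarith)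
        calc Real.log (stepProb m τ ν xt xt1 / stepProbMerged m τ ν xt xt1 xt2)
            ≤ Real.log (Real.exp ((k:ℝ) * ε)) :=
              Real.log_le_log (div_pos hstep1 hmerged) hdle
          _ = (k:ℝ) * ε := Real.log_exp _
      have hp0 : 0 ≤ stepProb m τ ν xt xt1 * stepProb m τ ν xt1 xt2 :=
        le_of_lt (mul_pos hstep1 hstep2)
      have : Real.log ((stepProb m τ ν xt xt1 * stepProb m τ ν xt1 xt2)
            / (stepProbMerged m τ ν xt xt1 xt2 * stepProb m τ ν xt1 xt2))
          ≤ 2 * (k:ℝ) * Real.log 2 + (k:ℝ) * ε := by linarith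
      exact mul_le_mul_of_nonneg_left this hp0
  calc ∑ xt : Fin L → V, ∑ xt1 : Fin L → V,
        (stepProb m τ ν xt xt1 * stepProb m τ ν xt1 xt2) *
          Real.log ((stepProb m τ ν xt xt1 * stepProb m τ ν xt1 xt2)
            / (stepProbMerged m τ ν xt xt1 xt2 * stepProb m τ ν xt1 xt2))
      ≤ ∑ xt : Fin L → V, ∑ xt1 : Fin L → V,
        (stepProb m τ ν xt xt1 * stepProb m τ ν xt1 xt2) *
          (2 * (k:ℝ) * Real.log 2 + (k:ℝ) * ε) :=
        Finset.sum_le_sum (fun xt _ => Finset.sum_le_sum (fun xt1 _ => hkey xt xt1))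
    _ = (∑ xt : Fin L → V, ∑ xt1 : Fin L → V,
          stepProb m τ ν xt xt1 * stepProb m τ ν xt1 xt2) *
          (2 * (k:ℝ) * Real.log 2 + (k:ℝ) * ε) := by
        simp_rw [← Finset.sum_mul]
    _ = 2 * (k:ℝ) * Real.log 2 + (k:ℝ) * ε := by rw [hsum, one_mul]
end

section
/- Consider a masked diffusion reverse process over a vocabulary V with mask symbol m that unmasks L tokens (each exactly once) over T timesteps according to a fixed schedule, and partition the T timesteps into N contiguous blocks of B = T/N timesteps each. Let the full-trajectory likelihood decomposition be Π_{t=0}^{T−1} Π_{l : x_{t+1}^l = m, x_t^l ≠ m} π(x_t^l | x_{t+1}) and let the StepMerge decomposition be Π_{n=0}^{N−1} Π_{l : x_{(n+1)B}^l = m, x_{nB}^l ≠ m} π(x_{nB}^l | x_{(n+1)B}), with all factors positive on the support. Then the KL divergence D_N between the full-trajectory distribution and the StepMerge approximation satisfies D_N ≤ L · log( T/N + 1 ) + L · ε_block, where ε_block is the maximum block-level value prediction sensitivity over all blocks. -/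
/-!
STATEMENT 10: Approximation error bound for d2-StepMerge,
`D_N ≤ L · log(T/N + 1) + L · ε_block`.

A masked diffusion reverse process over vocabulary `V` with mask `m` unmasks `L` tokens
(each exactly once) over `T = N·B` timesteps according to a fixed schedule, starting from
the fully masked state; the `T` timesteps are partitioned into `N` contiguous blocks of
`B = T/N` timesteps each.  A trajectory is `y : Fin (N·B) → (Fin L → V)` (reverse time:
`y t = x_t`), extended at times `≥ T` by the fully masked state `x_T = (fun _ => m)`.
The full-trajectory likelihood decomposition is
`∏_{t<T} ∏_{l : x_{t+1}^l = m ∧ x_t^l ≠ m} π(x_t^l | x_{t+1})` (`fullTraj`), and the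
StepMerge decomposition is
`∏_{n<N} ∏_{l : x_{(n+1)B}^l = m ∧ x_{nB}^l ≠ m} π(x_{nB}^l | x_{(n+1)B})`
(`stepMergeTraj`), with all factors positive on the support.  Once a position is unmasked
it never changes, each token is unmasked exactly once, and `ε` (= `ε_block`) bounds, for
every block `n`, every timestep `t` in block `n`, every position `l`, value `v`, and every
reachable state, the log-ratio `log ( π(v | x_{t+1}) / π(v | x_{(n+1)B}) )` (the maximum
block-level value prediction sensitivity over all blocks).  Then
`D_N = ∑_y fullTraj(y) · log ( fullTraj(y) / stepMergeTraj(y) )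
     ≤ L · log ( T/N + 1 ) + L · ε`.
-/

/-- Extend a trajectory `y : Fin T → (Fin L → V)` (read at natural-number times) by the
fully masked state at all times `≥ T`. -/
def extState {V : Type*} {L T : ℕ} (y : Fin T → Fin L → V) (xinit : Fin L → V) :
    ℕ → Fin L → V :=
  fun t => if h : t < T then y ⟨t, h⟩ else xinit

/-- Full-trajectory likelihood decomposition: product, over all timesteps and all positions
that unmask at that timestep, of the per-token conditionals `π(x_t^l | x_{t+1})`. -/
noncomputable def fullTraj {V : Type*} [Fintype V] [DecidableEq V] (m : V) {L T : ℕ}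
    (π : (Fin L → V) → Fin L → V → ℝ) (y : Fin T → Fin L → V) : ℝ :=
  ∏ t ∈ Finset.range T,
    ∏ l ∈ Finset.univ.filter (fun l : Fin L =>
        extState y (fun _ => m) (t + 1) l = m ∧ extState y (fun _ => m) t l ≠ m),
      π (extState y (fun _ => m) (t + 1)) l (extState y (fun _ => m) t l)

/-- StepMerge likelihood decomposition with `N` blocks of `B` timesteps each: product, over
all blocks and all positions that unmask within that block, of `π(x_{nB}^l | x_{(n+1)B})`. -/
noncomputable def stepMergeTraj {V : Type*} [Fintype V] [DecidableEq V] (m : V)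
    {L : ℕ} (N B : ℕ)
    (π : (Fin L → V) → Fin L → V → ℝ) (y : Fin (N * B) → Fin L → V) : ℝ :=
  ∏ n ∈ Finset.range N,
    ∏ l ∈ Finset.univ.filter (fun l : Fin L =>
        extState y (fun _ => m) ((n + 1) * B) l = m ∧
        extState y (fun _ => m) (n * B) l ≠ m),
      π (extState y (fun _ => m) ((n + 1) * B)) l (extState y (fun _ => m) (n * B) l)

theorem stmt_10 {V : Type*} [Fintype V] [DecidableEq V] (m : V) {L N B : ℕ}
    (π : (Fin L → V) → Fin L → V → ℝ) (ε : ℝ)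
    (hN : 0 < N) (hB : 0 < B)
    (hπ : ∀ ctx l v, 0 ≤ π ctx l v)
    (hsum : ∑ y : Fin (N * B) → Fin L → V, fullTraj m π y = 1)
    (hexact : ∀ y : Fin (N * B) → Fin L → V, fullTraj m π y ≠ 0 → ∀ l,
        ((Finset.range (N * B)).filter fun t =>
          extState y (fun _ => m) (t + 1) l = m ∧
          extState y (fun _ => m) t l ≠ m).card = 1)
    (hpreserve : ∀ y : Fin (N * B) → Fin L → V, fullTraj m π y ≠ 0 → ∀ t l,
        extState y (fun _ => m) (t + 1) l ≠ m →
        extState y (fun _ => m) t l = extState y (fun _ => m) (t + 1) l)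
    (hpossupp : ∀ y : Fin (N * B) → Fin L → V, fullTraj m π y ≠ 0 → ∀ n < N, ∀ l,
        (extState y (fun _ => m) ((n + 1) * B) l = m ∧
         extState y (fun _ => m) (n * B) l ≠ m) →
        0 < π (extState y (fun _ => m) ((n + 1) * B)) l (extState y (fun _ => m) (n * B) l))
    (hbound : ∀ y : Fin (N * B) → Fin L → V, fullTraj m π y ≠ 0 →
        ∀ n < N, ∀ t, n * B ≤ t → t < (n + 1) * B → ∀ l v,
        Real.log (π (extState y (fun _ => m) (t + 1)) l v
          / π (extState y (fun _ => m) ((n + 1) * B)) l v) ≤ ε) :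
    ∑ y : Fin (N * B) → Fin L → V,
        fullTraj m π y * Real.log (fullTraj m π y / stepMergeTraj m N B π y)
      ≤ (L : ℝ) * Real.log ((N : ℝ) * (B : ℝ) / (N : ℝ) + 1) + (L : ℝ) * ε := by
  classical
  have hp0 : ∀ y : Fin (N * B) → Fin L → V, 0 ≤ fullTraj m π y := fun y =>
    Finset.prod_nonneg fun t _ => Finset.prod_nonneg fun l _ => hπ _ _ _
  -- pointwise bound on the log-ratio on the support
  have hpt : ∀ y : Fin (N * B) → Fin L → V, fullTraj m π y ≠ 0 →
      Real.log (fullTraj m π y / stepMergeTraj m N B π y) ≤ (L : ℝ) * ε := by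
    intro y h0
    set X := extState y (fun _ => m) with hXdef
    have hXbig : ∀ t, N * B ≤ t → ∀ l, X t l = m := by
      intro t ht l
      simp [hXdef, extState, Nat.not_lt.mpr ht]
    have h1 : ∀ l : Fin L,
        ∃ a, ((Finset.range (N * B)).filter fun t => X (t + 1) l = m ∧ X t l ≠ m) = {a} :=
      fun l => Finset.card_eq_one.mp (hexact y h0 l)
    choose tl htl using h1
    have htl_mem : ∀ l, tl l < N * B ∧ X (tl l + 1) l = m ∧ X (tl l) l ≠ m := by
      intro l
      have : tl l ∈ ((Finset.range (N * B)).filter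
          fun t => X (t + 1) l = m ∧ X t l ≠ m) := by
        rw [htl l]; exact Finset.mem_singleton_self _
      simpa [Finset.mem_filter, Finset.mem_range] using this
    have huniq : ∀ l t, t < N * B → X (t + 1) l = m → X t l ≠ m → t = tl l := by
      intro l t h1' h2 h3
      have : t ∈ ((Finset.range (N * B)).filter
          fun t => X (t + 1) l = m ∧ X t l ≠ m) :=
        Finset.mem_filter.mpr ⟨Finset.mem_range.mpr h1', h2, h3⟩
      rw [htl l] at this
      exact Finset.mem_singleton.mp this
    have hdown : ∀ l t s, s ≤ t → X t l ≠ m → X s l = X t l := by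
      intro l t
      induction t with
      | zero => intro s hs _; rw [Nat.le_zero.mp hs]
      | succ t ih =>
          intro s hs hne
          have h' : X t l = X (t + 1) l := hpreserve y h0 t l hne
          rcases Nat.lt_succ_iff_lt_or_eq.mp (Nat.lt_succ_of_le hs) with h | h
          · exact (ih s (by omega) (h' ▸ hne)).trans h'
          · rw [h]
    have hex : ∀ l d t, X t l ≠ m → X (t + d) l = m →
        ∃ u, t ≤ u ∧ X (u + 1) l = m ∧ X u l ≠ m := by
      intro l d
      induction d with
      | zero => intro t h1 h2; exact absurd h2 h1
      | succ d ih =>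
          intro t h1 h2
          by_cases hm : X (t + 1) l = m
          · exact ⟨t, le_refl t, hm, h1⟩
          · obtain ⟨u, hu1, hu2, hu3⟩ := ih (t + 1) hm (by
              have he : t + 1 + d = t + (d + 1) := by omega
              rw [he]; exact h2)
            exact ⟨u, by omega, hu2, hu3⟩
    have hup : ∀ l t, X t l ≠ m → t ≤ tl l := by
      intro l t hne
      have htT : t < N * B := by
        by_contra h
        exact hne (hXbig t (by omega) l)
      obtain ⟨u, hu1, hu2, hu3⟩ := hex l (N * B - t) t hne (by
        rw [Nat.add_sub_cancel' (le_of_lt htT)]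
        exact hXbig _ le_rfl l)
      have huT : u < N * B := by
        by_contra h
        exact hu3 (hXbig u (by omega) l)
      have := huniq l u huT hu2 hu3
      omega
    have hmask : ∀ l t, tl l < t → X t l = m := by
      intro l t h
      by_contra hne
      exact absurd (hup l t hne) (by omega)
    set nl : Fin L → ℕ := fun l => tl l / B with hnldef
    have hnl1 : ∀ l, nl l < N := fun l =>
      (Nat.div_lt_iff_lt_mul hB).mpr (htl_mem l).1
    have hnl2 : ∀ l, nl l * B ≤ tl l := fun l => Nat.div_mul_le_self _ _
    have hnl3 : ∀ l, tl l < (nl l + 1) * B := by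
      intro l
      have h1 := Nat.div_add_mod (tl l) B
      have h2 := Nat.mod_lt (tl l) hB
      have h3 : (nl l + 1) * B = nl l * B + B := by
        rw [Nat.add_mul, one_mul]
      have h4 : B * (tl l / B) = nl l * B := Nat.mul_comm _ _
      omega
    -- stepMerge block membership facts for n = nl l
    have hblock : ∀ l, X ((nl l + 1) * B) l = m ∧ X (nl l * B) l ≠ m := by
      intro l
      constructor
      · exact hmask l _ (hnl3 l)
      · rw [hdown l (tl l) (nl l * B) (hnl2 l) (htl_mem l).2.2]
        exact (htl_mem l).2.2
    -- the full trajectory product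
    have hA : fullTraj m π y = ∏ l : Fin L, π (X (tl l + 1)) l (X (tl l) l) := by
      unfold fullTraj
      rw [← hXdef]
      rw [Finset.prod_comm' (t' := Finset.univ)
        (s' := fun l => (Finset.range (N * B)).filter
          fun t => X (t + 1) l = m ∧ X t l ≠ m)
        (by intro t l; simp [Finset.mem_filter]; try tauto)]
      refine Finset.prod_congr rfl fun l _ => ?_
      rw [htl l, Finset.prod_singleton]
    have hB' : stepMergeTraj m N B π y
        = ∏ l : Fin L, π (X ((nl l + 1) * B)) l (X (nl l * B) l) := by
      unfold stepMergeTraj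
      rw [← hXdef]
      rw [Finset.prod_comm' (t' := Finset.univ)
        (s' := fun l => (Finset.range N).filter
          fun n => X ((n + 1) * B) l = m ∧ X (n * B) l ≠ m)
        (by intro n l; simp [Finset.mem_filter]; try tauto)]
      refine Finset.prod_congr rfl fun l _ => ?_
      have hset : (Finset.range N).filter
          (fun n => X ((n + 1) * B) l = m ∧ X (n * B) l ≠ m) = {nl l} := by
        ext n
        simp only [Finset.mem_filter, Finset.mem_range, Finset.mem_singleton]
        constructor
        · rintro ⟨hnN, hm1, hm2⟩
          have h1 : n * B ≤ tl l := hup l _ hm2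
          have h2 : tl l < (n + 1) * B := by
            by_contra h
            push_neg at h
            have := hdown l (tl l) ((n + 1) * B) h (htl_mem l).2.2
            rw [hm1] at this
            exact (htl_mem l).2.2 this.symm
          have h3 := hnl2 l
          have h4 := hnl3 l
          have ha : n < nl l + 1 := lt_of_mul_lt_mul_right (by omega) (Nat.zero_le B)
          have hb' : nl l < n + 1 := lt_of_mul_lt_mul_right (by omega) (Nat.zero_le B)
          omega
        · rintro rfl
          exact ⟨hnl1 l, (hblock l).1, (hblock l).2⟩
      rw [hset, Finset.prod_singleton]
    -- positivity
    have hfpos : ∀ l : Fin L, 0 < π (X (tl l + 1)) l (X (tl l) l) := by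
      intro l
      rcases (hπ (X (tl l + 1)) l (X (tl l) l)).lt_or_eq with h | h
      · exact h
      · exfalso
        apply h0
        rw [hA]
        exact Finset.prod_eq_zero (Finset.mem_univ l) h.symm
    have hgpos : ∀ l : Fin L, 0 < π (X ((nl l + 1) * B)) l (X (nl l * B) l) := by
      intro l
      exact hpossupp y h0 (nl l) (hnl1 l) l (hblock l)
    -- log of the ratio
    rw [hA, hB', ← Finset.prod_div_distrib,
      Real.log_prod (fun l _ => div_ne_zero (hfpos l).ne' (hgpos l).ne')]
    calc ∑ l : Fin L, Real.log (π (X (tl l + 1)) l (X (tl l) l)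
            / π (X ((nl l + 1) * B)) l (X (nl l * B) l))
        ≤ ∑ _l : Fin L, ε := by
          refine Finset.sum_le_sum fun l _ => ?_
          rw [hdown l (tl l) (nl l * B) (hnl2 l) (htl_mem l).2.2]
          exact hbound y h0 (nl l) (hnl1 l) (tl l) (hnl2 l) (hnl3 l) l (X (tl l) l)
      _ = (L : ℝ) * ε := by
          simp [Finset.sum_const, mul_comm]
  -- sum up
  have hC : (0 : ℝ) ≤ (L : ℝ) * Real.log ((N : ℝ) * (B : ℝ) / (N : ℝ) + 1) := by
    have hNB : (N : ℝ) * (B : ℝ) / (N : ℝ) = (B : ℝ) := by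
      field_simp
    rw [hNB]
    have : (0 : ℝ) ≤ Real.log ((B : ℝ) + 1) :=
      Real.log_nonneg (by have : (0:ℝ) ≤ (B:ℝ) := Nat.cast_nonneg B; linarith)
    exact mul_nonneg (Nat.cast_nonneg L) this
  calc ∑ y : Fin (N * B) → Fin L → V,
        fullTraj m π y * Real.log (fullTraj m π y / stepMergeTraj m N B π y)
      ≤ ∑ y : Fin (N * B) → Fin L → V, fullTraj m π y * ((L : ℝ) * ε) := by
        refine Finset.sum_le_sum fun y _ => ?_
        by_cases h : fullTraj m π y = 0
        · simp [h]
        · exact mul_le_mul_of_nonneg_left (hpt y h) (hp0 y)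
    _ = (L : ℝ) * ε := by
        rw [← Finset.sum_mul, hsum, one_mul]
    _ ≤ (L : ℝ) * Real.log ((N : ℝ) * (B : ℝ) / (N : ℝ) + 1) + (L : ℝ) * ε := by
        linarith
end
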